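/- Let R ∈ |F^×| and let f_1, f_2 ∈ A^{m−1}(R)[z_m] be Weierstrass polynomials that are relatively prime as elements of A^m(R) (i.e., every common divisor of f_1 and f_2 in A^m(R) is a unit). Then f_1 and f_2 are relatively prime in the polynomial ring A^{m−1}(R)[z_m]. -/

import Mathlib

open MvPowerSeries Filter

set_option linter.unusedSectionVars false

namespace NA

variable (F : Type) [NormedField F] [IsUltrametricDist F]

/-- The value group `|F^×|` of a normed field, as a set of real numbers. -/
def VG : Set ℝ := {r | ∃ c : F, c ≠ 0 ∧ ‖c‖ = r}

lemma VG.pos {r : ℝ} (hr : r ∈ VG F) : 0 < r := by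
  obtain ⟨c, hc, rfl⟩ := hr
  exact norm_pos_iff.mpr hc

/-- The total degree `|γ|` of a multi-index. -/
def mdeg {m : ℕ} (γ : Fin m →₀ ℕ) : ℕ := γ.sum fun _ n => n

lemma mdeg_add {m : ℕ} (α β : Fin m →₀ ℕ) : mdeg (α + β) = mdeg α + mdeg β :=
  Finsupp.sum_add_index' (fun _ => rfl) (fun _ _ _ => rfl)

/-- The ring `A^m(r)` of power series converging on the closed ball of radius `r`:
those `f = Σ a_γ z^γ` with `|a_γ| r^{|γ|} → 0` as `|γ| → ∞`. -/
def A (m : ℕ) (r : ℝ) : Subring (MvPowerSeries (Fin m) F) where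
  carrier := {f | Tendsto (fun γ : Fin m →₀ ℕ => ‖coeff γ f‖ * r ^ mdeg γ)
    cofinite (nhds 0)}
  zero_mem' := by
    simp only [Set.mem_setOf_eq, map_zero, norm_zero, zero_mul]
    exact tendsto_const_nhds
  one_mem' := by
    refine tendsto_const_nhds.congr' ?_
    refine Filter.eventuallyEq_of_mem ((Set.finite_singleton (0 : Fin m →₀ ℕ)).compl_mem_cofinite) ?_
    intro γ hγ
    have : (γ : Fin m →₀ ℕ) ≠ 0 := by simpa using hγ
    simp [MvPowerSeries.coeff_one, this]
  add_mem' := by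
    intro f g hf hg
    simp only [Set.mem_setOf_eq] at hf hg ⊢
    rw [tendsto_zero_iff_abs_tendsto_zero] at hf hg ⊢
    refine squeeze_zero (fun γ => abs_nonneg _) (fun γ => ?_) (by simpa using hf.add hg)
    simp only [Function.comp_apply, abs_mul, abs_norm, abs_pow, map_add, ← add_mul]
    exact mul_le_mul_of_nonneg_right (norm_add_le _ _) (by positivity)
  neg_mem' := by
    intro f hf
    simpa only [Set.mem_setOf_eq, map_neg, norm_neg] using hf
  mul_mem' := by
    intro f g hf hg
    simp only [Set.mem_setOf_eq] at hf hg ⊢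
    rw [tendsto_zero_iff_abs_tendsto_zero] at hf hg ⊢
    have habs : ∀ (h : MvPowerSeries (Fin m) F),
        (abs ∘ fun γ : Fin m →₀ ℕ => ‖coeff γ h‖ * r ^ mdeg γ)
          = fun γ => ‖coeff γ h‖ * |r| ^ mdeg γ := by
      intro h; funext γ
      simp [Function.comp_apply, abs_mul, abs_pow]
    rw [habs] at hf hg ⊢
    set v := fun (h : MvPowerSeries (Fin m) F) (γ : Fin m →₀ ℕ) =>
      ‖coeff γ h‖ * |r| ^ mdeg γ with hv
    have vnonneg : ∀ h γ, 0 ≤ v h γ := fun h γ => by positivity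
    have finlt : ∀ (h : MvPowerSeries (Fin m) F),
        Tendsto (v h) cofinite (nhds 0) → ∀ δ : ℝ, 0 < δ → {γ | ¬ v h γ < δ}.Finite := by
      intro h hh δ hδ
      have := (Metric.tendsto_nhds.mp hh) δ hδ
      rw [Filter.eventually_cofinite] at this
      refine this.subset ?_
      intro γ hγ
      simp only [Set.mem_setOf_eq, Real.dist_eq, sub_zero] at *
      intro hc; exact hγ (lt_of_abs_lt hc)
    have bound : ∀ (h : MvPowerSeries (Fin m) F),
        Tendsto (v h) cofinite (nhds 0) → ∃ M : ℝ, 1 ≤ M ∧ ∀ γ, v h γ ≤ M := by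
      intro h hh
      have h1 := finlt h hh 1 one_pos
      refine ⟨1 + ∑ γ ∈ h1.toFinset, v h γ,
        le_add_of_nonneg_right (Finset.sum_nonneg fun γ _ => vnonneg h γ), ?_⟩
      intro γ
      by_cases hγ : γ ∈ h1.toFinset
      · have := Finset.single_le_sum (f := v h) (fun γ _ => vnonneg h γ) hγ
        linarith
      · simp only [Set.Finite.mem_toFinset, Set.mem_setOf_eq, not_not] at hγ
        have hs : (0:ℝ) ≤ ∑ γ ∈ h1.toFinset, v h γ :=
          Finset.sum_nonneg fun γ _ => vnonneg h γ
        linarith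
    rw [Metric.tendsto_nhds]
    intro ε hε
    rw [Filter.eventually_cofinite]
    obtain ⟨Mf, hMf1, hMf⟩ := bound f hf
    obtain ⟨Mg, hMg1, hMg⟩ := bound g hg
    set M := max Mf Mg with hMdef
    have hM1 : (1:ℝ) ≤ M := le_trans hMf1 (le_max_left _ _)
    have hM0 : (0:ℝ) < M := lt_of_lt_of_le one_pos hM1
    set δ := ε / M with hδdef
    have hδ0 : 0 < δ := div_pos hε hM0
    have hSf := finlt f hf δ hδ0
    have hSg := finlt g hg δ hδ0
    refine ((hSf.prod hSg).image
      (fun p : (Fin m →₀ ℕ) × (Fin m →₀ ℕ) => p.1 + p.2)).subset ?_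
    intro γ hγ
    simp only [Set.mem_setOf_eq, Real.dist_eq, sub_zero] at hγ
    have hγ' : ε ≤ v (f * g) γ := by
      rw [abs_of_nonneg (vnonneg (f*g) γ)] at hγ
      exact not_lt.mp hγ
    have hne : (Finset.HasAntidiagonal.antidiagonal γ).Nonempty := ⟨(γ, 0), by simp⟩
    obtain ⟨p, hp, hple⟩ := IsUltrametricDist.exists_norm_finset_sum_le_of_nonempty hne
      (fun p : (Fin m →₀ ℕ) × (Fin m →₀ ℕ) => coeff p.1 f * coeff p.2 g)
    have hpsum : p.1 + p.2 = γ := Finset.HasAntidiagonal.mem_antidiagonal.mp hp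
    have key : v (f * g) γ ≤ v f p.1 * v g p.2 := by
      have hdeg : mdeg γ = mdeg p.1 + mdeg p.2 := by
        rw [← hpsum, mdeg_add]
      calc v (f * g) γ = ‖coeff γ (f * g)‖ * |r| ^ mdeg γ := rfl
        _ ≤ ‖coeff p.1 f * coeff p.2 g‖ * |r| ^ mdeg γ := by
            refine mul_le_mul_of_nonneg_right ?_ (by positivity)
            rw [MvPowerSeries.coeff_mul]
            exact hple
        _ = (‖coeff p.1 f‖ * |r| ^ mdeg p.1) * (‖coeff p.2 g‖ * |r| ^ mdeg p.2) := by
            rw [norm_mul, hdeg, pow_add]; ring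
    refine ⟨p, ⟨?_, ?_⟩, hpsum⟩
    · simp only [Set.mem_setOf_eq, not_lt]
      have h1 : ε ≤ v f p.1 * M := by
        refine hγ'.trans (key.trans ?_)
        exact mul_le_mul_of_nonneg_left ((hMg p.2).trans (le_max_right _ _)) (vnonneg f p.1)
      exact (div_le_iff₀ hM0).mpr h1
    · simp only [Set.mem_setOf_eq, not_lt]
      have h1 : ε ≤ M * v g p.2 := by
        refine hγ'.trans (key.trans ?_)
        exact mul_le_mul_of_nonneg_right ((hMf p.1).trans (le_max_left _ _)) (vnonneg g p.2)
      rw [hδdef, div_le_iff₀' hM0]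
      exact h1

lemma mem_A_iff {m : ℕ} {r : ℝ} {f : MvPowerSeries (Fin m) F} :
    f ∈ A F m r ↔ Tendsto (fun γ : Fin m →₀ ℕ => ‖coeff γ f‖ * r ^ mdeg γ)
      cofinite (nhds 0) := Iff.rfl

instance {m : ℕ} : IsDomain (MvPowerSeries (Fin m) F) :=
  NoZeroDivisors.to_isDomain _

/-- The Gauss norm `|f|_r = sup_γ |a_γ| r^{|γ|}`. -/
noncomputable def nrm (r : ℝ) {m : ℕ} (f : MvPowerSeries (Fin m) F) : ℝ :=
  ⨆ γ : Fin m →₀ ℕ, ‖coeff γ f‖ * r ^ mdeg γ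

/-- For `0 < r ≤ R`, `A^m(R) ⊆ A^m(r)`. -/
lemma A_mono {m : ℕ} {r R : ℝ} (h0 : 0 < r) (hrR : r ≤ R) : A F m R ≤ A F m r := by
  intro f hf
  rw [mem_A_iff] at hf ⊢
  refine squeeze_zero (fun γ => by positivity) (fun γ => ?_) hf
  exact mul_le_mul_of_nonneg_left (pow_le_pow_left₀ h0.le hrR _) (norm_nonneg _)

/-- Evaluation of a power series at a point, as a (possibly junk) sum. -/
noncomputable def eval {m : ℕ} (f : MvPowerSeries (Fin m) F) (z : Fin m → F) : F :=
  ∑' γ : Fin m →₀ ℕ, coeff γ f * ∏ i, z i ^ (γ i)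

/-- The ring of integers `{a : |a| ≤ 1}` of `F`. -/
def O : Subring F where
  carrier := {a | ‖a‖ ≤ 1}
  zero_mem' := by simp
  one_mem' := by simp
  add_mem' := by
    intro a b ha hb
    exact (IsUltrametricDist.norm_add_le_max a b).trans (max_le ha hb)
  neg_mem' := by intro a ha; simpa using ha
  mul_mem' := by
    intro a b ha hb
    rw [Set.mem_setOf_eq, norm_mul]
    exact mul_le_one₀ ha (norm_nonneg b) hb

/-- The maximal ideal `{a : |a| < 1}` of the ring of integers. -/
def mIdeal : Ideal (O F) where
  carrier := {a | ‖(a : F)‖ < 1}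
  zero_mem' := by simp
  add_mem' := by
    intro a b ha hb
    exact lt_of_le_of_lt (IsUltrametricDist.norm_add_le_max (a : F) b) (max_lt ha hb)
  smul_mem' := by
    intro c a ha
    simp only [Set.mem_setOf_eq, smul_eq_mul] at ha ⊢
    rw [Subring.coe_mul, norm_mul]
    exact mul_lt_one_of_nonneg_of_lt_one_right c.2 (norm_nonneg _) ha

/-- The residue class field of `F`. -/
def Res := O F ⧸ mIdeal F

noncomputable instance : CommRing (Res F) := by unfold Res; infer_instance

/-- Reduction of an element of absolute value at most `1` to the residue field. -/
noncomputable def red (a : F) (h : ‖a‖ ≤ 1) : Res F :=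
  Ideal.Quotient.mk (mIdeal F) ⟨a, h⟩

/-- The ring of entire functions on `F^m`: power series lying in every `A^m(r)`. -/
def Ent (m : ℕ) : Subring (MvPowerSeries (Fin m) F) where
  carrier := {f | ∀ r ∈ VG F, f ∈ A F m r}
  zero_mem' := fun r _ => (A F m r).zero_mem
  one_mem' := fun r _ => (A F m r).one_mem
  add_mem' := fun hf hg r hr => (A F m r).add_mem (hf r hr) (hg r hr)
  neg_mem' := fun hf r hr => (A F m r).neg_mem (hf r hr)
  mul_mem' := fun hf hg r hr => (A F m r).mul_mem (hf r hr) (hg r hr)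

lemma mem_Ent_iff {m : ℕ} {f : MvPowerSeries (Fin m) F} :
    f ∈ Ent F m ↔ ∀ r ∈ VG F, f ∈ A F m r := Iff.rfl

/-- `d` is a greatest common divisor of the family `s`. -/
def IsGCDOf {α : Type*} [CommRing α] {ι : Type*} (d : α) (s : ι → α) : Prop :=
  (∀ i, d ∣ s i) ∧ ∀ e : α, (∀ i, e ∣ s i) → e ∣ d

section LastVariable

variable (m : ℕ)

/-- The subring of power series in `m+1` variables not depending on the last variable. -/
def indepLast : Subring (MvPowerSeries (Fin (m+1)) F) where
  carrier := {f | ∀ γ : Fin (m+1) →₀ ℕ, γ (Fin.last m) ≠ 0 → coeff γ f = 0}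
  zero_mem' := by intro γ _; simp
  one_mem' := by
    intro γ hγ
    have h : γ ≠ 0 := fun h => hγ (by simp [h])
    simp [MvPowerSeries.coeff_one, h]
  add_mem' := by
    intro f g hf hg γ hγ
    simp [map_add, hf γ hγ, hg γ hγ]
  neg_mem' := by
    intro f hf γ hγ
    simp [hf γ hγ]
  mul_mem' := by
    intro f g hf hg γ hγ
    rw [MvPowerSeries.coeff_mul]
    refine Finset.sum_eq_zero fun p hp => ?_
    have hpsum : p.1 + p.2 = γ := Finset.HasAntidiagonal.mem_antidiagonal.mp hp
    by_cases h1 : p.1 (Fin.last m) = 0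
    · have h2 : p.2 (Fin.last m) ≠ 0 := by
        intro h2
        apply hγ
        rw [← hpsum, Finsupp.add_apply, h1, h2]
      rw [hg p.2 h2, mul_zero]
    · rw [hf p.1 h1, zero_mul]

/-- The ring `A^{m-1}(r)`: analytic functions not depending on the last variable. -/
noncomputable def Aprev (r : ℝ) : Subring (MvPowerSeries (Fin (m+1)) F) :=
  A F (m+1) r ⊓ indepLast F m

lemma Aprev_le (r : ℝ) : Aprev F m r ≤ A F (m+1) r := inf_le_left

lemma X_mem (r : ℝ) {k : ℕ} (i : Fin k) : (X i : MvPowerSeries (Fin k) F) ∈ A F k r := by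
  rw [mem_A_iff]
  refine tendsto_const_nhds.congr' ?_
  refine Filter.eventuallyEq_of_mem
    ((Set.finite_singleton (Finsupp.single i 1)).compl_mem_cofinite) ?_
  intro γ hγ
  have h : γ ≠ Finsupp.single i 1 := by simpa using hγ
  simp [MvPowerSeries.X, MvPowerSeries.coeff_monomial, h]

/-- The last coordinate function `z_m` as an element of `A^m(r)`. -/
noncomputable def zmA (r : ℝ) : A F (m+1) r :=
  ⟨X (Fin.last m), X_mem F r (Fin.last m)⟩

/-- Interpret a polynomial `W ∈ A^{m-1}(r)[z_m]` as an analytic function in `A^m(r)`. -/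
noncomputable def toAm (r : ℝ) (W : Polynomial (Aprev F m r)) : A F (m+1) r :=
  Polynomial.eval₂ (Subring.inclusion (Aprev_le F m r)) (zmA F m r) W

/-- `W ∈ A^{m-1}(r)[z_m]` is a Weierstrass polynomial of degree `n = deg W`:
it is monic and `|W|_r = r^n`. -/
def IsWeierstrass (r : ℝ) (W : Polynomial (Aprev F m r)) : Prop :=
  W.Monic ∧ nrm F r ((toAm F m r W : A F (m+1) r) : MvPowerSeries (Fin (m+1)) F)
    = r ^ W.natDegree

/-- The coefficient `A_j` of `z_m^j` when `f` is written as `Σ_j A_j(z') z_m^j`,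
viewed as a power series not involving the last variable. -/
noncomputable def slice (f : MvPowerSeries (Fin (m+1)) F) (j : ℕ) :
    MvPowerSeries (Fin (m+1)) F :=
  fun γ => if γ (Fin.last m) = 0 then
    coeff (γ + Finsupp.single (Fin.last m) j) f else 0

/-- `f` is `z_m`-distinguished of degree `n` in `A^m(r)`: writing `f = Σ_j A_j z_m^j`,
`A_n` is a unit in `A^{m-1}(r)`, `|f|_r = |A_n|_r r^n`, and `|A_j|_r r^j < |A_n|_r r^n`
for `j > n`. -/
def IsDistinguished (r : ℝ) (f : MvPowerSeries (Fin (m+1)) F) (n : ℕ) : Prop :=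
  (∃ h : slice F m f n ∈ Aprev F m r, IsUnit (⟨slice F m f n, h⟩ : Aprev F m r)) ∧
  nrm F r f = nrm F r (slice F m f n) * r ^ n ∧
  ∀ j : ℕ, n < j → nrm F r (slice F m f j) * r ^ j < nrm F r (slice F m f n) * r ^ n

/-- The linear forms `z_i + u_i z_m` (and `z_m` for `i = m`) defining
the change of variables `σ_u`. -/
noncomputable def linSub (u : Fin m → F) (i : Fin (m+1)) : MvPolynomial (Fin (m+1)) F :=
  MvPolynomial.X i + (if h : (i : ℕ) < m then
    MvPolynomial.C (u ⟨i, h⟩) * MvPolynomial.X (Fin.last m) else 0)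

/-- The composition `f ∘ σ_u`, where
`σ_u(z_1,…,z_m) = (z_1 + u_1 z_m, …, z_{m-1} + u_{m-1} z_m, z_m)`. -/
noncomputable def sigmaSub (u : Fin m → F) (f : MvPowerSeries (Fin (m+1)) F) :
    MvPowerSeries (Fin (m+1)) F :=
  fun δ => ∑ t ∈ Finset.Nat.antidiagonalTuple (m+1) (mdeg δ),
    coeff (Finsupp.equivFunOnFinite.symm t) f *
      MvPolynomial.coeff δ (∏ i, linSub F m u i ^ t i)

end LastVariable

/-- The formal partial derivative `∂f/∂z_j` of a power series. -/
noncomputable def pderiv {m : ℕ} (j : Fin m) (f : MvPowerSeries (Fin m) F) :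
    MvPowerSeries (Fin m) F :=
  fun γ => ((γ j + 1 : ℕ) : F) * coeff (γ + Finsupp.single j 1) f

/-!
A common divisor `d` of `f₁, f₂` in `A^{m-1}(R)[z_m]` has a unit leading coefficient, since `f₁`
is monic, and is a unit of `A^m(R)`. Setting `z' = 0` turns `d` into a polynomial `D ∈ F[z]` of
the same degree dividing `f₁(0, z)`, whose roots lie in `|z| ≤ R` because `|f₁|_R = R^n`. But `D`
stays invertible among the power series converging on `|z| ≤ R`, whereas `z - c` with `|c| ≤ R`
is not, as `1/(z - c) = -Σ z^j / c^{j+1}`. So `D` has no roots and `d` is constant.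
-/

section

variable {F}

lemma _root_.Polynomial.Monic.norm_le_of_isRoot {K : Type*} [NormedField K] [IsUltrametricDist K]
    {P : Polynomial K} (hP : P.Monic) {R : ℝ} (hR : 0 < R)
    (hcoeff : ∀ j, ‖P.coeff j‖ * R ^ j ≤ R ^ P.natDegree) {c : K} (hc : P.IsRoot c) :
    ‖c‖ ≤ R := by
  by_contra! hcR
  set n := P.natDegree
  have hn : n ≠ 0 := fun h => by simp [hP.natDegree_eq_zero.mp h] at hc
  have hterm : ∀ j < n, ‖P.coeff j * c ^ j‖ < ‖c ^ n‖ := by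
    intro j hj
    obtain ⟨k, hk⟩ := Nat.exists_eq_add_of_lt hj
    have hcoeff_j : ‖P.coeff j‖ ≤ R ^ (k + 1) := by
      have h := hcoeff j
      rw [hk, add_assoc, pow_add, mul_comm (R ^ j)] at h
      exact le_of_mul_le_mul_right h (pow_pos hR j)
    have hc0 : 0 < ‖c‖ := hR.trans hcR
    calc ‖P.coeff j * c ^ j‖ = ‖P.coeff j‖ * ‖c‖ ^ j := by rw [norm_mul, norm_pow]
      _ ≤ R ^ (k + 1) * ‖c‖ ^ j := by gcongr
      _ < ‖c‖ ^ (k + 1) * ‖c‖ ^ j := by gcongr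
      _ = ‖c ^ n‖ := by rw [norm_pow, hk]; ring
  have hsum : ‖∑ j ∈ Finset.range n, P.coeff j * c ^ j‖ < ‖c ^ n‖ := by
    obtain ⟨j, hj, hle⟩ := IsUltrametricDist.exists_norm_finsetSum_le_of_nonempty
      (Finset.nonempty_range_iff.mpr hn) fun j => P.coeff j * c ^ j
    exact hle.trans_lt (hterm j (Finset.mem_range.mp hj))
  have hroot : ∑ j ∈ Finset.range n, P.coeff j * c ^ j + c ^ n = 0 := by
    rw [← hc.eq_zero, Polynomial.eval_eq_sum_range, Finset.sum_range_succ,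
      hP.coeff_natDegree, one_mul]
  rw [eq_neg_of_add_eq_zero_right hroot, norm_neg] at hsum
  exact hsum.false

lemma _root_.PowerSeries.ne_zero_of_X_sub_C_mul_eq_one {K : Type*} [Field K] {c : K}
    {u : PowerSeries K} (h : (PowerSeries.X - PowerSeries.C c) * u = 1) : c ≠ 0 := by
  rintro rfl
  simpa using congrArg PowerSeries.constantCoeff h

lemma _root_.PowerSeries.coeff_of_X_sub_C_mul_eq_one {K : Type*} [Field K] {c : K}
    {u : PowerSeries K} (h : (PowerSeries.X - PowerSeries.C c) * u = 1) (j : ℕ) :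
    PowerSeries.coeff j u = -(c ^ (j + 1))⁻¹ := by
  have hc := PowerSeries.ne_zero_of_X_sub_C_mul_eq_one h
  have hinv : PowerSeries.invUnitsSub (Units.mk0 c hc) = -u :=
    left_inv_eq_right_inv (PowerSeries.invUnitsSub_mul_sub _)
      (by rw [Units.val_mk0, mul_neg, ← neg_mul, neg_sub, h])
  have := congrArg (PowerSeries.coeff j) hinv
  simp [PowerSeries.coeff_invUnitsSub] at this
  linear_combination this

lemma _root_.PowerSeries.not_isRestricted_of_X_sub_C_mul_eq_one {K : Type*} [NormedField K]
    {c : K} {u : PowerSeries K} (h : (PowerSeries.X - PowerSeries.C c) * u = 1) {R : ℝ}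
    (hR : 0 < R) (hcR : ‖c‖ ≤ R) : ¬ PowerSeries.IsRestricted R u := by
  have hc := PowerSeries.ne_zero_of_X_sub_C_mul_eq_one h
  rw [PowerSeries.isRestricted_iff]
  intro htend
  obtain ⟨j, hj⟩ := (htend.eventually_lt_const (inv_pos.mpr hR)).exists
  refine hj.not_ge ?_
  rw [PowerSeries.coeff_of_X_sub_C_mul_eq_one h, norm_neg, norm_inv, norm_pow]
  have hc0 : 0 < ‖c‖ := norm_pos_iff.mpr hc
  calc R⁻¹ = (R ^ (j + 1))⁻¹ * R ^ j := by field_simp; ring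
    _ ≤ (‖c‖ ^ (j + 1))⁻¹ * R ^ j := by gcongr

lemma _root_.Polynomial.isRestricted_coe {S : Type*} [NormedRing S] (p : Polynomial S) (c : ℝ) :
    PowerSeries.IsRestricted c (p : PowerSeries S) := by
  rw [PowerSeries.isRestricted_iff]
  refine tendsto_const_nhds.congr' (eventuallyEq_of_mem
    p.support.finite_toSet.compl_mem_cofinite fun j hj => ?_)
  simp [Polynomial.notMem_support_iff.mp hj]

lemma _root_.Polynomial.IsRoot.coe_mul_ne_one {K : Type*} [NormedField K] [IsUltrametricDist K]
    {D : Polynomial K} {c : K} (hc : D.IsRoot c) {R : ℝ} (hR : 0 < R) (hcR : ‖c‖ ≤ R)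
    {E : PowerSeries K} (hE : PowerSeries.IsRestricted R E) : (D : PowerSeries K) * E ≠ 1 := by
  intro hDE
  obtain ⟨H, rfl⟩ := Polynomial.dvd_iff_isRoot.mpr hc
  refine PowerSeries.not_isRestricted_of_X_sub_C_mul_eq_one (u := (H : PowerSeries K) * E) ?_
    hR hcR (PowerSeries.isRestricted.mul R (H.isRestricted_coe R) hE)
  rw [← mul_assoc, ← hDE, Polynomial.coe_mul, Polynomial.coe_sub, Polynomial.coe_X,
    Polynomial.coe_C]

lemma _root_.Polynomial.isUnit_of_forall_not_isRoot_map {S K : Type*} [CommRing S] [Field K]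
    [IsAlgClosed K] (ψ : S →+* K) {d : Polynomial S} (hlc : IsUnit d.leadingCoeff)
    (hroot : ∀ c, ¬ (d.map ψ).IsRoot c) : IsUnit d := by
  have hdeg : d.natDegree = 0 := by
    by_contra hd
    have hmap : (d.map ψ).natDegree = d.natDegree :=
      Polynomial.natDegree_map_of_leadingCoeff_ne_zero ψ (hlc.map ψ).ne_zero
    obtain ⟨c, hc⟩ := IsAlgClosed.exists_root (d.map ψ) fun h =>
      hd (hmap ▸ Polynomial.natDegree_eq_of_degree_eq_some h)
    exact hroot c hc
  rw [Polynomial.eq_C_of_natDegree_eq_zero hdeg]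
  rw [Polynomial.leadingCoeff, hdeg] at hlc
  exact Polynomial.isUnit_C.mpr hlc

lemma coeff_mul_pow_le_nrm {k : ℕ} {r : ℝ} {f : MvPowerSeries (Fin k) F}
    (hf : f ∈ A F k r) (γ : Fin k →₀ ℕ) :
    ‖coeff γ f‖ * r ^ mdeg γ ≤ nrm F r f :=
  le_ciSup hf.bddAbove_range_of_cofinite γ

lemma mdeg_single {k : ℕ} (i : Fin k) (j : ℕ) : mdeg (Finsupp.single i j) = j :=
  Finsupp.sum_single_index rfl

/-- Restriction `f ↦ f(0, …, 0, z)` to the `z_m`-axis. -/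
noncomputable def lastAxis (m : ℕ) : MvPowerSeries (Fin (m+1)) F →+* PowerSeries F where
  toFun f := PowerSeries.mk fun j => coeff (Finsupp.single (Fin.last m) j) f
  map_zero' := by ext j; simp
  map_one' := by
    ext j
    simp [PowerSeries.coeff_one, MvPowerSeries.coeff_one, Finsupp.single_eq_zero]
  map_add' f g := by ext j; simp
  map_mul' f g := by
    ext j
    simp [PowerSeries.coeff_mul, MvPowerSeries.coeff_mul, Finsupp.antidiagonal_single,
      Finset.sum_map]

lemma coeff_lastAxis (m j : ℕ) (f : MvPowerSeries (Fin (m+1)) F) :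
    PowerSeries.coeff j (lastAxis m f) = coeff (Finsupp.single (Fin.last m) j) f := by
  simp only [lastAxis, RingHom.coe_mk, MonoidHom.coe_mk, OneHom.coe_mk, PowerSeries.coeff_mk]

lemma lastAxis_X (m : ℕ) :
    lastAxis m (X (Fin.last m) : MvPowerSeries (Fin (m+1)) F) = PowerSeries.X := by
  ext j
  simp only [coeff_lastAxis, MvPowerSeries.coeff_X, PowerSeries.coeff_X,
    (Finsupp.single_injective _).eq_iff]

lemma lastAxis_of_mem_indepLast {m : ℕ} {f : MvPowerSeries (Fin (m+1)) F}
    (hf : f ∈ indepLast F m) : lastAxis m f = PowerSeries.C (constantCoeff f) := by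
  ext j
  rw [coeff_lastAxis, PowerSeries.coeff_C]
  rcases j with _ | j
  · rw [Finsupp.single_zero, coeff_zero_eq_constantCoeff_apply, if_pos rfl]
  · rw [hf _ (by simp), if_neg j.succ_ne_zero]

lemma isRestricted_lastAxis {m : ℕ} {R : ℝ} {f : MvPowerSeries (Fin (m+1)) F}
    (hf : f ∈ A F (m+1) R) : PowerSeries.IsRestricted R (lastAxis m f) := by
  rw [PowerSeries.isRestricted_iff]
  refine (((mem_A_iff F).mp hf).comp
    (Finsupp.single_injective (Fin.last m)).tendsto_cofinite).congr fun j => ?_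
  simp [coeff_lastAxis, mdeg_single]

noncomputable def constantCoeffAprev (m : ℕ) (R : ℝ) : Aprev F m R →+* F :=
  constantCoeff.comp (Aprev F m R).subtype

lemma lastAxis_toAm {m : ℕ} {R : ℝ} (W : Polynomial (Aprev F m R)) :
    lastAxis m (toAm F m R W : MvPowerSeries (Fin (m+1)) F)
      = (W.map (constantCoeffAprev m R) : PowerSeries F) := by
  have hcoeff : (lastAxis m).comp
      ((A F (m+1) R).subtype.comp (Subring.inclusion (Aprev_le F m R)))
      = PowerSeries.C.comp (constantCoeffAprev m R) :=
    RingHom.ext fun a => lastAxis_of_mem_indepLast (Subring.mem_inf.mp a.2).2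
  have htoAm : (toAm F m R W : MvPowerSeries (Fin (m+1)) F) = Polynomial.eval₂
      ((A F (m+1) R).subtype.comp (Subring.inclusion (Aprev_le F m R))) (X (Fin.last m)) W :=
    Polynomial.hom_eval₂ W _ (A F (m+1) R).subtype (zmA F m R)
  rw [htoAm, Polynomial.hom_eval₂, lastAxis_X, hcoeff, ← Polynomial.eval₂_map,
    Polynomial.eval₂_C_X_eq_coe]

lemma toAm_dvd_toAm {m : ℕ} {R : ℝ} {d W : Polynomial (Aprev F m R)} (h : d ∣ W) :
    toAm F m R d ∣ toAm F m R W :=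
  map_dvd (Polynomial.eval₂RingHom _ _) h

lemma IsWeierstrass.norm_le_of_isRoot {m : ℕ} {R : ℝ} {W : Polynomial (Aprev F m R)}
    (hW : IsWeierstrass F m R W) (hR : 0 < R) {c : F}
    (hc : (W.map (constantCoeffAprev m R)).IsRoot c) : ‖c‖ ≤ R := by
  refine (hW.1.map _).norm_le_of_isRoot hR (fun j => ?_) hc
  rw [hW.1.natDegree_map, ← hW.2, ← Polynomial.coeff_coe, ← lastAxis_toAm, coeff_lastAxis]
  simpa only [mdeg_single] using
    coeff_mul_pow_le_nrm (toAm F m R W).2 (Finsupp.single (Fin.last m) j)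

lemma exists_isRestricted_mul_eq_one {m : ℕ} {R : ℝ} {d : Polynomial (Aprev F m R)}
    (hd : IsUnit (toAm F m R d)) : ∃ E : PowerSeries F, PowerSeries.IsRestricted R E ∧
      (d.map (constantCoeffAprev m R) : PowerSeries F) * E = 1 := by
  obtain ⟨e, he⟩ := hd.exists_right_inv
  refine ⟨lastAxis m e, isRestricted_lastAxis e.2, ?_⟩
  rw [← lastAxis_toAm, ← map_mul, ← Subring.coe_mul, he, Subring.coe_one, map_one]

end

theorem statement11 [IsAlgClosed F]
    (m : ℕ) (R : ℝ) (hR : R ∈ VG F)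
    (f₁ f₂ : Polynomial (Aprev F m R))
    (h₁ : IsWeierstrass F m R f₁)
    (hrel : IsRelPrime (toAm F m R f₁) (toAm F m R f₂)) :
    IsRelPrime f₁ f₂ := by
  intro d hd₁ hd₂
  obtain ⟨E, hE, hdE⟩ :=
    exists_isRestricted_mul_eq_one (hrel (toAm_dvd_toAm hd₁) (toAm_dvd_toAm hd₂))
  refine Polynomial.isUnit_of_forall_not_isRoot_map (constantCoeffAprev m R)
    (h₁.1.isUnit_leadingCoeff_of_dvd hd₁) fun c hc => hc.coe_mul_ne_one (VG.pos F hR) ?_ hE hdE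
  exact h₁.norm_le_of_isRoot (VG.pos F hR) (hc.dvd (Polynomial.map_dvd _ hd₁))

end NA
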